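/- The value-naming transformation commutes with label erasure: for every CPS term M, er(C_vn(M)) ≡ C_vn(er(M)). -/

import Mathlib

/-!
Statement 5: The value-naming transformation commutes with label erasure:
for every CPS term `M`, `er(C_vn(M)) ≡ C_vn(er(M))`.
-/

namespace CostLabelling

abbrev Var := ℕ
abbrev Label := ℕ

inductive Tm : Type where
  | var : Var → Tm
  | lam : List Var → Tm → Tm
  | app : Tm → List Tm → Tm
  | tup : List Tm → Tm
  | proj : ℕ → Tm → Tm
  | letin : Var → Tm → Tm → Tm
  | pre : Label → Tm → Tm
  | post : Tm → Label → Tm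

inductive IsValue : Tm → Prop where
  | var : ∀ x, IsValue (.var x)
  | lam : ∀ xs M, IsValue (.lam xs M)
  | tup : ∀ Vs, (∀ V ∈ Vs, IsValue V) → IsValue (.tup Vs)

mutual
def subst (V : Tm) (x : Var) : Tm → Tm
  | .var y => if y = x then V else .var y
  | .lam xs M => if x ∈ xs then .lam xs M else .lam xs (subst V x M)
  | .app M Ns => .app (subst V x M) (substList V x Ns)
  | .tup Ms => .tup (substList V x Ms)
  | .proj i M => .proj i (subst V x M)
  | .letin y M N => .letin y (subst V x M) (if y = x then N else subst V x N)
  | .pre l M => .pre l (subst V x M)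
  | .post M l => .post (subst V x M) l
def substList (V : Tm) (x : Var) : List Tm → List Tm
  | [] => []
  | M :: Ms => subst V x M :: substList V x Ms
end

mutual
def fv : Tm → List Var
  | .var x => [x]
  | .lam xs M => (fv M).filter (fun y => y ∉ xs)
  | .app M Ns => fv M ++ fvList Ns
  | .tup Ms => fvList Ms
  | .proj _ M => fv M
  | .letin y M N => fv M ++ (fv N).filter (fun z => z ≠ y)
  | .pre _ M => fv M
  | .post M _ => fv M
def fvList : List Tm → List Var
  | [] => []
  | M :: Ms => fv M ++ fvList Ms
end

mutual
/-- The label-erasure function: removes all pre- and post-labellings. -/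
def er : Tm → Tm
  | .var x => .var x
  | .lam xs M => .lam xs (er M)
  | .app M Ns => .app (er M) (erList Ns)
  | .tup Ms => .tup (erList Ms)
  | .proj i M => .proj i (er M)
  | .letin x M N => .letin x (er M) (er N)
  | .pre _ M => er M
  | .post M _ => er M
def erList : List Tm → List Tm
  | [] => []
  | M :: Ms => er M :: erList Ms
end

/-- `V` is not a variable. -/
def NonVar (V : Tm) : Prop := ∀ x, V ≠ .var x

mutual
/-- Values of the CPS calculus `λℓ_cps`. -/
inductive CpsVal : Tm → Prop where
  | var : ∀ x, CpsVal (.var x)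
  | lam : ∀ xs M, CpsTm M → CpsVal (.lam xs M)
  | tup : ∀ Vs, (∀ V ∈ Vs, CpsVal V) → CpsVal (.tup Vs)

/-- Terms of the CPS calculus `λℓ_cps` :
`M ::= @(V,V⁺) | let x = πᵢ(V) in M | ℓ > M`. -/
inductive CpsTm : Tm → Prop where
  | app : ∀ V Ws, CpsVal V → (∀ W ∈ Ws, CpsVal W) → Ws ≠ [] →
      CpsTm (.app V Ws)
  | letproj : ∀ x i V M, CpsVal V → CpsTm M →
      CpsTm (.letin x (.proj i V) M)
  | pre : ∀ l M, CpsTm M → CpsTm (.pre l M)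
end

mutual
/-- `Vn M N` : the transformation in value named form maps the CPS term `M`
to `N` (`C_vn(M) ≡ N`); fresh names are chosen nondeterministically. -/
inductive Vn : Tm → Tm → Prop where
  | app_vars : ∀ (x : Var) (zs : List Var), Vn (.app (.var x) (zs.map .var)) (.app (.var x) (zs.map .var))
  | app_head : ∀ V Ms y N R, NonVar V → y ∉ fv (.app V Ms) →
      Vn (.app (.var y) Ms) N → VnVal V y N R → Vn (.app V Ms) R
  | app_arg : ∀ (x : Var) (vs : List Var) V Ms y N R, NonVar V →
      y ∉ fv (.app (.var x) (vs.map .var ++ V :: Ms)) →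
      Vn (.app (.var x) (vs.map .var ++ .var y :: Ms)) N → VnVal V y N R →
      Vn (.app (.var x) (vs.map .var ++ V :: Ms)) R
  | letp_var : ∀ x i z M N, Vn M N →
      Vn (.letin x (.proj i (.var z)) M) (.letin x (.proj i (.var z)) N)
  | letp_val : ∀ x i V M y N R, NonVar V →
      y ∉ fv (.letin x (.proj i V) M) →
      Vn M N → VnVal V y (.letin x (.proj i (.var y)) N) R →
      Vn (.letin x (.proj i V) M) R
  | pre : ∀ l M N, Vn M N → Vn (.pre l M) (.pre l N)

/-- `VnVal V y N R` : `R ≡ Φ(V,y)[N]`, where `Φ(V,y)` is the value-naming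
context of the paper (a sequence of let-bindings naming all non-variable
values of `V`, the outermost one bound to `y`). -/
inductive VnVal : Tm → Var → Tm → Tm → Prop where
  | lam : ∀ xs M M' y N, Vn M M' →
      VnVal (.lam xs M) y N (.letin y (.lam xs M') N)
  | tup_vars : ∀ (zs : List Var) (y : Var) (N : Tm),
      VnVal (.tup (zs.map .var)) y N (.letin y (.tup (zs.map .var)) N)
  | tup_step : ∀ (vs : List Var) V Ws z y N R R', NonVar V →
      z ∉ fv (.tup (vs.map .var ++ V :: Ws)) → z ∉ fv N → z ≠ y →
      VnVal (.tup (vs.map .var ++ .var z :: Ws)) y N R →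
      VnVal V z R R' →
      VnVal (.tup (vs.map .var ++ V :: Ws)) y N R'
end

/-! Erasure commutes with every rule of the value-naming relation: labels occur in its rules only
through `ℓ > M`, which erasure drops on both sides; erasure keeps free variables, so freshness
side conditions survive; and the values that get named are λs and tuples, which stay non-variables. -/

theorem erList_eq_map : ∀ Ms : List Tm, erList Ms = Ms.map er
  | [] => rfl
  | M :: Ms => by rw [erList, erList_eq_map Ms, List.map_cons]

theorem erList_vars_append (vs : List Var) (V : Tm) (Ms : List Tm) :
    erList (vs.map .var ++ V :: Ms) = vs.map .var ++ er V :: erList Ms := by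
  simp [erList_eq_map, Function.comp_def, er]

theorem erList_vars (vs : List Var) : erList (vs.map .var) = vs.map .var := by
  simp [erList_eq_map, Function.comp_def, er]

mutual
theorem fv_er : ∀ M, fv (er M) = fv M
  | .var _ => rfl
  | .lam xs M => by rw [er, fv, fv, fv_er M]
  | .app M Ns => by rw [er, fv, fv, fv_er M, fvList_er Ns]
  | .tup Ms => by rw [er, fv, fv, fvList_er Ms]
  | .proj _ M => by rw [er, fv, fv, fv_er M]
  | .letin x M N => by rw [er, fv, fv, fv_er M, fv_er N]
  | .pre _ M => by rw [er, fv, fv_er M]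
  | .post M _ => by rw [er, fv, fv_er M]
theorem fvList_er : ∀ Ms, fvList (erList Ms) = fvList Ms
  | [] => rfl
  | M :: Ms => by rw [erList, fvList, fvList, fv_er M, fvList_er Ms]
end

theorem VnVal.nonVar_er {V R N : Tm} {y : Var} (h : VnVal V y N R) : NonVar (er V) := by
  cases h <;> intro x <;> simp [er]

mutual
theorem Vn.erase : ∀ {M N : Tm}, Vn M N → Vn (er M) (er N)
  | _, _, .app_vars x zs => by
      rw [er, er, erList_vars]
      exact .app_vars x zs
  | _, _, .app_head V Ms y N R _ hy hvn hval => by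
      refine .app_head _ _ y _ _ hval.nonVar_er ?_ hvn.erase hval.erase
      rwa [← fv_er] at hy
  | _, _, .app_arg x vs V Ms y N R _ hy hvn hval => by
      have hvn' := hvn.erase
      rw [er, erList_vars_append] at hvn' ⊢
      refine .app_arg x vs _ _ y _ _ hval.nonVar_er ?_ hvn' hval.erase
      rwa [← fv_er, er, erList_vars_append] at hy
  | _, _, .letp_var x i z M N hvn => .letp_var x i z _ _ hvn.erase
  | _, _, .letp_val x i V M y N R _ hy hvn hval => by
      refine .letp_val x i _ _ y _ _ hval.nonVar_er ?_ hvn.erase hval.erase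
      rwa [← fv_er] at hy
  | _, _, .pre _ M N hvn => hvn.erase
theorem VnVal.erase : ∀ {V : Tm} {y : Var} {N R : Tm}, VnVal V y N R →
    VnVal (er V) y (er N) (er R)
  | _, _, _, _, .lam xs M M' y N hvn => .lam xs _ _ y _ hvn.erase
  | _, _, _, _, .tup_vars zs y N => by
      rw [er, er, er, erList_vars]
      exact .tup_vars zs y (er N)
  | _, _, _, _, .tup_step vs V Ws z y N R R' _ hz hzN hzy hval hvalV => by
      have hval' := hval.erase
      rw [er, erList_vars_append] at hval' ⊢
      refine .tup_step vs _ _ z y _ _ _ hvalV.nonVar_er ?_ ?_ hzy hval' hvalV.erase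
      · rwa [← fv_er, er, erList_vars_append] at hz
      · rwa [fv_er]
end

/-- For every CPS term `M`, `er(C_vn(M)) ≡ C_vn(er(M))` :
whenever `N ≡ C_vn(M)`, the term `er(N)` is a value named form of `er(M)`. -/
theorem value_naming_commutes_with_erasure
    (M N : Tm) (hM : CpsTm M) (hvn : Vn M N) :
    Vn (er M) (er N) :=
  hvn.erase

end CostLabelling
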